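/- arXiv:1612.06587 — 7 statements merged into one kernel-verified Lean document; each statement's English description precedes it below -/
import Mathlib

section
/- If A ∈ ℝ^{n×n} is Lyapunov diagonally stable, i.e., there exists a positive definite diagonal matrix P with AᵀP + PA negative definite, then -A is a P-matrix. -/
/-!
For a fixed `P ≻ 0`, the set of matrices `M` with `Mᵀ P + P M ≻ 0` is convex and contains `1`.
It contains no singular matrix: if `M v = 0` with `v ≠ 0`, the quadratic form of `Mᵀ P + P M` at
`v` is `(M v)ᵀ P v + vᵀ P (M v) = 0`. Hence `det` never vanishes on this connected set, and since
`det 1 = 1` it is positive on all of it. When `P` is diagonal, the condition passes from `-A` to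
each of its principal submatrices (with the corresponding principal submatrix of `P`), so every
principal minor of `-A` is positive.
-/

open Matrix

/-- `M` is a P-matrix: every principal minor is positive. -/
def IsPMatrix {m : ℕ} (M : Matrix (Fin m) (Fin m) ℝ) : Prop :=
  ∀ s : Finset (Fin m), s.Nonempty →
    0 < (M.submatrix (fun i : s => (i : Fin m)) (fun j : s => (j : Fin m))).det

namespace Matrix

variable {m n R : Type*}

theorem convex_setOf_posDef : Convex ℝ {M : Matrix n n ℝ | M.PosDef} := by
  intro X hX Y hY a b ha hb hab
  rcases ha.eq_or_lt with rfl | ha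
  · obtain rfl : b = 1 := by simpa using hab
    simpa using hY
  · exact (hX.smul ha).add_posSemidef (hY.posSemidef.smul hb)

variable [Fintype n]

theorem convex_setOf_posDef_transpose_mul_add_mul (P : Matrix n n ℝ) :
    Convex ℝ {M : Matrix n n ℝ | (Mᵀ * P + P * M).PosDef} := by
  refine convex_setOf_posDef.is_linear_preimage (f := fun M => Mᵀ * P + P * M) ⟨?_, ?_⟩
  · intro X Y
    simp only [transpose_add, add_mul, mul_add]
    abel
  · intro c X
    simp only [transpose_smul, smul_mul_assoc, mul_smul_comm, smul_add]

theorem det_ne_zero_of_posDef_transpose_mul_add_mul [DecidableEq n] [CommRing R] [IsDomain R] [PartialOrder R]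
    [StarRing R] [TrivialStar R] {M P : Matrix n n R} (h : (Mᵀ * P + P * M).PosDef) :
    M.det ≠ 0 := by
  intro hdet
  obtain ⟨v, hv, hMv⟩ := exists_mulVec_eq_zero_iff.mpr hdet
  have := h.dotProduct_mulVec_pos hv
  simp [add_mulVec, ← mulVec_mulVec, hMv, dotProduct_mulVec, vecMul_transpose] at this

theorem det_pos_of_isPreconnected [DecidableEq n] {S : Set (Matrix n n ℝ)}
    (hS : IsPreconnected S) (h1 : 1 ∈ S) (hdet : ∀ M ∈ S, M.det ≠ 0) {M : Matrix n n ℝ}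
    (hM : M ∈ S) : 0 < M.det := by
  by_contra! hle
  obtain ⟨N, hN, hN0⟩ :=
    hS.intermediate_value hM h1 continuous_id.matrix_det.continuousOn ⟨hle, by simp⟩
  exact hdet N hN hN0

theorem det_pos_of_posDef_transpose_mul_add_mul [DecidableEq n] {M P : Matrix n n ℝ}
    (hP : P.PosDef) (hM : (Mᵀ * P + P * M).PosDef) : 0 < M.det :=
  det_pos_of_isPreconnected (convex_setOf_posDef_transpose_mul_add_mul P).isPreconnected
    (show (1ᵀ * P + P * 1).PosDef by simpa using hP.add hP)
    (fun _ hN => det_ne_zero_of_posDef_transpose_mul_add_mul hN) hM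

theorem IsDiag.transpose_mul_add_mul_submatrix [DecidableEq n] [Fintype m] [DecidableEq m]
    [Semiring R] {P : Matrix n n R} (hP : P.IsDiag) (M : Matrix n n R) {e : m → n}
    (he : Function.Injective e) :
    (M.submatrix e e)ᵀ * P.submatrix e e + P.submatrix e e * M.submatrix e e =
      (Mᵀ * P + P * M).submatrix e e := by
  rw [← hP.diagonal_diag, submatrix_diagonal _ _ he]
  ext i j
  simp [mul_diagonal, diagonal_mul]

end Matrix

theorem diag_lyap_stable_neg_pmatrix {n : ℕ} (A : Matrix (Fin n) (Fin n) ℝ)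
    (h : ∃ P : Matrix (Fin n) (Fin n) ℝ, P.IsDiag ∧ P.PosDef ∧ (-(Aᵀ * P + P * A)).PosDef) :
    IsPMatrix (-A) := by
  obtain ⟨P, hPdiag, hP, hA⟩ := h
  have hnegA : ((-A)ᵀ * P + P * -A).PosDef := by
    simpa only [transpose_neg, neg_mul, mul_neg, neg_add] using hA
  intro s _
  have hs : Function.Injective ((↑) : s → Fin n) := Subtype.val_injective
  refine det_pos_of_posDef_transpose_mul_add_mul (hP.submatrix hs) ?_
  rw [hPdiag.transpose_mul_add_mul_submatrix _ hs]
  exact hnegA.submatrix hs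
end

section
/- Let A, B ∈ ℝ^{n×n}. Suppose that for every nonzero positive semidefinite symmetric 2n×2n matrix H with blocks H₁₁, H₁₂, H₁₂ᵀ, H₂₂ (each n×n) satisfying diag(H₁₁) = diag(H₂₂), the matrix A H₁₁ + B H₁₂ᵀ has a negative diagonal entry. Then for every nonzero positive semidefinite symmetric 2n×2n matrix H with diag(H₁₁) ≥ diag(H₂₂) (entrywise), the matrix A H₁₁ + B H₁₂ᵀ has a negative diagonal entry. -/
/-!
Adding the nonnegative gap `diag H₁₁ - diag H₂₂` to the diagonal of the `H₂₂` block keeps `H`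
positive semidefinite and nonzero, makes the two diagonals equal, and does not touch `H₁₁` or
`H₁₂`, hence not `A H₁₁ + B H₁₂ᵀ` either; so the hypothesis applies to the modified matrix.
-/

open Matrix

namespace Matrix

variable {n R : Type*}

open scoped ComplexOrder MatrixOrder in
theorem PosSemidef.add_ne_zero {𝕜 : Type*} [RCLike 𝕜] {A B : Matrix n n 𝕜} (hA : A.PosSemidef)
    (hB : B.PosSemidef) (hA0 : A ≠ 0) : A + B ≠ 0 :=
  fun h ↦ hA0 ((add_eq_zero_iff_of_nonneg hA.nonneg hB.nonneg).1 h).1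

section equalizeDiag

variable [AddCommGroup R] (H : Matrix (n ⊕ n) (n ⊕ n) R)

def diagGap₂₂ : n ⊕ n → R :=
  Sum.elim 0 fun i ↦ H (.inl i) (.inl i) - H (.inr i) (.inr i)

variable [DecidableEq n]

def equalizeDiag₂₂ : Matrix (n ⊕ n) (n ⊕ n) R :=
  H + diagonal H.diagGap₂₂

@[simp]
theorem toBlocks₁₁_equalizeDiag₂₂ : H.equalizeDiag₂₂.toBlocks₁₁ = H.toBlocks₁₁ := by
  ext i j
  by_cases hij : i = j <;> simp [equalizeDiag₂₂, diagGap₂₂, toBlocks₁₁, hij]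

@[simp]
theorem toBlocks₁₂_equalizeDiag₂₂ : H.equalizeDiag₂₂.toBlocks₁₂ = H.toBlocks₁₂ := by
  ext i j
  simp [equalizeDiag₂₂, toBlocks₁₂]

theorem equalizeDiag₂₂_inl_inl_eq_inr_inr (i : n) :
    H.equalizeDiag₂₂ (.inl i) (.inl i) = H.equalizeDiag₂₂ (.inr i) (.inr i) := by
  simp [equalizeDiag₂₂, diagGap₂₂]

end equalizeDiag

theorem posSemidef_diagonal_diagGap₂₂ [Ring R] [PartialOrder R] [StarRing R] [StarOrderedRing R]
    [DecidableEq n] {H : Matrix (n ⊕ n) (n ⊕ n) R}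
    (hdiag : ∀ i, H (.inr i) (.inr i) ≤ H (.inl i) (.inl i)) :
    (diagonal H.diagGap₂₂).PosSemidef :=
  posSemidef_diagonal_iff.2 <| Sum.forall.2 ⟨fun _ ↦ le_rfl, fun i ↦ sub_nonneg.2 (hdiag i)⟩

end Matrix

theorem diag_eq_condition_extends_to_diag_ge {n : ℕ} (A B : Matrix (Fin n) (Fin n) ℝ)
    (h : ∀ H : Matrix (Fin n ⊕ Fin n) (Fin n ⊕ Fin n) ℝ, H ≠ 0 → H.PosSemidef →
      (∀ i : Fin n, H (Sum.inl i) (Sum.inl i) = H (Sum.inr i) (Sum.inr i)) →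
      ∃ i : Fin n, (A * H.toBlocks₁₁ + B * (H.toBlocks₁₂)ᵀ) i i < 0) :
    ∀ H : Matrix (Fin n ⊕ Fin n) (Fin n ⊕ Fin n) ℝ, H ≠ 0 → H.PosSemidef →
      (∀ i : Fin n, H (Sum.inr i) (Sum.inr i) ≤ H (Sum.inl i) (Sum.inl i)) →
      ∃ i : Fin n, (A * H.toBlocks₁₁ + B * (H.toBlocks₁₂)ᵀ) i i < 0 := by
  intro H hH0 hH hdiag
  have hgap := posSemidef_diagonal_diagGap₂₂ hdiag
  simpa using h H.equalizeDiag₂₂ (hH.add_ne_zero hgap hH0) (hH.add hgap)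
    H.equalizeDiag₂₂_inl_inl_eq_inr_inr
end

section
/- Let (A, B) be a pair of n×n real matrices such that there exist positive definite diagonal matrices P, Q with AᵀP + PA + Q + PBQ⁻¹BᵀP ≺ 0 (diagonal Riccati stability). Let S = [[S₁₁, S₁₂],[S₁₂ᵀ, S₂₂]] be a positive semidefinite symmetric 2n×2n matrix with diag(S₁₁) = diag(S₂₂) having all entries strictly positive. Then the pair (A ∘ S₁₁, B ∘ S₁₂) is also diagonally Riccati stable, where ∘ denotes the Hadamard (entrywise) product. -/
/-!
For diagonal `P` and `Q ≻ 0`, the Riccati inequality is, by a Schur complement, positive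
definiteness of the block matrix `M = [[-(AᵀP + PA + Q), -PB], [-BᵀP, Q]]`. A strict form of
the Schur product theorem makes `M ∘ S` positive definite, and since `P` and `Q` are diagonal
and `diag S₁₁ = diag S₂₂`, `M ∘ S` is the block matrix of the same shape built from
`A ∘ S₁₁`, `B ∘ S₁₂`, `P` and `Q ∘ S₂₂`.
-/

open Matrix

/-- The pair `(A, B)` is diagonally Riccati stable. -/
def DiagRiccatiStable {m : ℕ} (A B : Matrix (Fin m) (Fin m) ℝ) : Prop :=
  ∃ P Q : Matrix (Fin m) (Fin m) ℝ, P.IsDiag ∧ Q.IsDiag ∧ P.PosDef ∧ Q.PosDef ∧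
    (-(Aᵀ * P + P * A + Q + P * B * Q⁻¹ * Bᵀ * P)).PosDef

namespace Matrix

open scoped ComplexOrder

section RCLike

variable {m n 𝕜 : Type*} [Fintype m] [Fintype n] [DecidableEq m] [DecidableEq n] [RCLike 𝕜]

theorem fromBlocks₂₂_posDef_iff (A : Matrix m m 𝕜) (B : Matrix m n 𝕜) {D : Matrix n n 𝕜}
    (hD : D.PosDef) : (fromBlocks A B Bᴴ D).PosDef ↔ (A - B * D⁻¹ * Bᴴ).PosDef := by
  have := hD.isUnit.invertible
  have hdet : (fromBlocks A B Bᴴ D).det = D.det * (A - B * D⁻¹ * Bᴴ).det := by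
    rw [det_fromBlocks₂₂, invOf_eq_nonsing_inv]
  refine ⟨fun h => ?_, fun h => ?_⟩
  · refine ((PosDef.fromBlocks₂₂ A B hD).mp h.posSemidef).posDef_iff_det_ne_zero.mpr ?_
    exact right_ne_zero_of_mul (hdet ▸ h.det_pos.ne')
  · refine ((PosDef.fromBlocks₂₂ A B hD).mpr h.posSemidef).posDef_iff_det_ne_zero.mpr ?_
    exact hdet ▸ mul_ne_zero hD.det_pos.ne' h.det_pos.ne'

open scoped MatrixOrder in
theorem PosDef.hadamard_posSemidef {X S : Matrix n n 𝕜} (hX : X.PosDef) (hS : S.PosSemidef)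
    (hdiag : ∀ i, 0 < S i i) : (X ⊙ S).PosDef := by
  cases isEmpty_or_nonempty n
  · exact ⟨hX.isHermitian.hadamard hS.isHermitian, fun x hx => absurd (Subsingleton.elim x 0) hx⟩
  -- `X ≥ r • 1` with `r > 0`, hence `X ⊙ S ≥ r • diagonal (diag S) ≻ 0`.
  obtain ⟨r, hr, hrX⟩ : ∃ r > 0, algebraMap ℝ (Matrix n n 𝕜) r ≤ X :=
    (CFC.exists_pos_algebraMap_le_iff hX.isHermitian).mpr
      fun _ => hX.isStrictlyPositive.spectrum_pos
  have hsplit :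
      X ⊙ S = (X - algebraMap ℝ _ r) ⊙ S + diagonal fun i => (r : 𝕜) * S i i := by
    rw [← sub_add_cancel X (algebraMap ℝ _ r), add_hadamard, sub_add_cancel,
      algebraMap_eq_diagonal, diagonal_hadamard]
    rfl
  rw [hsplit]
  exact PosDef.posSemidef_add ((le_iff.mp hrX).hadamard hS)
    (PosDef.diagonal fun i => mul_pos (by exact_mod_cast hr) (hdiag i))

end RCLike

section Hadamard

variable {l m n o α : Type*}

theorem fromBlocks_hadamard_fromBlocks [Mul α] (A A' : Matrix n l α) (B B' : Matrix n m α)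
    (C C' : Matrix o l α) (D D' : Matrix o m α) :
    fromBlocks A B C D ⊙ fromBlocks A' B' C' D' =
      fromBlocks (A ⊙ A') (B ⊙ B') (C ⊙ C') (D ⊙ D') := by
  ext (i | i) (j | j) <;> rfl

theorem neg_hadamard [Mul α] [HasDistribNeg α] (A B : Matrix m n α) : (-A) ⊙ B = -(A ⊙ B) := by
  ext i j
  exact neg_mul _ _

theorem diagonal_mul_hadamard [Fintype m] [DecidableEq m] [NonUnitalSemiring α] (d : m → α)
    (A B : Matrix m n α) : (diagonal d * A) ⊙ B = diagonal d * (A ⊙ B) := by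
  ext i j
  simp [mul_assoc]

theorem mul_diagonal_hadamard [Fintype n] [DecidableEq n] [NonUnitalCommSemiring α] (d : n → α)
    (A B : Matrix m n α) : (A * diagonal d) ⊙ B = (A ⊙ B) * diagonal d := by
  ext i j
  simp [mul_right_comm]

theorem IsDiag.hadamard [MulZeroClass α] {Q : Matrix n n α} (hQ : Q.IsDiag)
    (M : Matrix n n α) : (Q ⊙ M).IsDiag := fun i j hij => by
  simp [hQ hij]

theorem IsDiag.hadamard_eq_of_diag_eq [MulZeroClass α] {Q M N : Matrix n n α}
    (hQ : Q.IsDiag) (h : M.diag = N.diag) : Q ⊙ M = Q ⊙ N := by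
  ext i j
  rcases eq_or_ne i j with rfl | hij
  · exact congrArg (Q i i * ·) (congrFun h i)
  · simp [hQ hij]

end Hadamard

end Matrix

section Riccati

variable {n R : Type*} [Fintype n] [DecidableEq n]

def riccatiBlock [CommRing R] (A B P Q : Matrix n n R) : Matrix (n ⊕ n) (n ⊕ n) R :=
  fromBlocks (-(Aᵀ * P + P * A + Q)) (-(P * B)) (-(P * B))ᵀ Q

theorem riccatiBlock_posDef_iff (A B : Matrix n n ℝ) {P Q : Matrix n n ℝ} (hP : Pᵀ = P)
    (hQ : Q.PosDef) :
    (riccatiBlock A B P Q).PosDef ↔ (-(Aᵀ * P + P * A + Q + P * B * Q⁻¹ * Bᵀ * P)).PosDef := by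
  rw [riccatiBlock, ← conjTranspose_eq_transpose_of_trivial (-(P * B)),
    fromBlocks₂₂_posDef_iff _ _ hQ, conjTranspose_eq_transpose_of_trivial, transpose_neg,
    transpose_mul, hP]
  refine iff_of_eq (congrArg PosDef ?_)
  simp only [Matrix.neg_mul, Matrix.mul_neg, neg_neg, Matrix.mul_assoc]
  abel

theorem riccatiBlock_hadamard_fromBlocks [CommRing R] (A B Q S₁₁ S₁₂ S₂₂ : Matrix n n R)
    (p : n → R) (h₁₁ : S₁₁ᵀ = S₁₁) (hQ : Q ⊙ S₁₁ = Q ⊙ S₂₂) :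
    riccatiBlock A B (diagonal p) Q ⊙ fromBlocks S₁₁ S₁₂ S₁₂ᵀ S₂₂ =
      riccatiBlock (A ⊙ S₁₁) (B ⊙ S₁₂) (diagonal p) (Q ⊙ S₂₂) := by
  have hAt : Aᵀ ⊙ S₁₁ = (A ⊙ S₁₁)ᵀ := by rw [transpose_hadamard, h₁₁]
  simp only [riccatiBlock, fromBlocks_hadamard_fromBlocks, ← transpose_hadamard, neg_hadamard,
    add_hadamard, diagonal_mul_hadamard, mul_diagonal_hadamard, hAt, hQ]

end Riccati

theorem hadamard_preserves_diag_riccati {n : ℕ} (A B : Matrix (Fin n) (Fin n) ℝ)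
    (hAB : DiagRiccatiStable A B)
    (S : Matrix (Fin n ⊕ Fin n) (Fin n ⊕ Fin n) ℝ) (hS : S.PosSemidef)
    (hdiag : ∀ i : Fin n, S (Sum.inl i) (Sum.inl i) = S (Sum.inr i) (Sum.inr i))
    (hpos : ∀ i : Fin n, 0 < S (Sum.inl i) (Sum.inl i)) :
    DiagRiccatiStable (A.hadamard S.toBlocks₁₁) (B.hadamard S.toBlocks₁₂) := by
  obtain ⟨P, Q, hPd, hQd, hP, hQ, hR⟩ := hAB
  obtain ⟨p, rfl⟩ : ∃ p, P = diagonal p := ⟨_, hPd.diagonal_diag.symm⟩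
  obtain ⟨h₁₁, h₁₂, -, -⟩ := isSymm_fromBlocks_iff.mp <| by
    rw [fromBlocks_toBlocks]
    exact (conjTranspose_eq_transpose_of_trivial S).symm.trans hS.isHermitian
  have hSdiag : ∀ i, 0 < S i i := by
    rintro (i | i)
    exacts [hpos i, hdiag i ▸ hpos i]
  have hQ' : (Q ⊙ S.toBlocks₂₂).PosDef :=
    hQ.hadamard_posSemidef (hS.submatrix Sum.inr) fun i => hSdiag (Sum.inr i)
  refine ⟨diagonal p, Q ⊙ S.toBlocks₂₂, hPd, hQd.hadamard _, hP, hQ', ?_⟩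
  have hMS := ((riccatiBlock_posDef_iff A B (diagonal_transpose p) hQ).mpr hR).hadamard_posSemidef
    hS hSdiag
  rw [← fromBlocks_toBlocks S, ← h₁₂, riccatiBlock_hadamard_fromBlocks A B Q _ _ _ p h₁₁
    (hQd.hadamard_eq_of_diag_eq (funext hdiag : S.toBlocks₁₁.diag = S.toBlocks₂₂.diag))] at hMS
  exact (riccatiBlock_posDef_iff _ _ (diagonal_transpose p) hQ').mp hMS
end

section
/- Let (A, B) be a diagonally Riccati stable pair in ℝ^{n×n}, and let D, E be diagonal matrices with diagonal entries d_ii, e_ii satisfying 0 < e_ii² ≤ d_ii² for all i. Then the pair (DAD, DBE) is also diagonally Riccati stable; moreover, if P, Q are diagonal positive definite matrices satisfying the Riccati inequality for (A, B), then P and DQD satisfy it for (DAD, DBE). -/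
/-!
Diagonal matrices commute, so with `P = diag p`, `Q = diag q`, `D = diag d`, `E = diag e` the Riccati
matrix of `(DAD, DBE)` with multipliers `P, DQD` equals `D (R - (PB) M (PB)ᵀ) D`, where `R` is the
Riccati matrix of `(A, B)` with `P, Q` and `M = diag ((1 - e_i² / d_i²) / q_i)`. As `e_i² ≤ d_i²`,
`M ⪰ 0`, so the negated Riccati matrix is a congruence by the invertible `D` of a positive definite
matrix plus a positive semidefinite one.
-/

open Matrix

namespace Matrix

variable {ι K : Type*} [Fintype ι] [DecidableEq ι] [Field K]

noncomputable def riccati (A B P Q : Matrix ι ι K) : Matrix ι ι K :=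
  Aᵀ * P + P * A + Q + P * B * Q⁻¹ * Bᵀ * P

lemma IsDiag.mul {α : Type*} [Semiring α] {A B : Matrix ι ι α} (hA : A.IsDiag) (hB : B.IsDiag) : (A * B).IsDiag := by
  rw [← hA.diagonal_diag, ← hB.diagonal_diag, diagonal_mul_diagonal]
  exact isDiag_diagonal _

lemma inv_diagonal_of_ne_zero {v : ι → K} (hv : ∀ i, v i ≠ 0) :
    (diagonal v)⁻¹ = diagonal v⁻¹ :=
  inv_eq_right_inv <| by
    rw [diagonal_mul_diagonal, ← diagonal_one]
    exact congrArg diagonal (funext fun i => mul_inv_cancel₀ (hv i))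

lemma riccati_diagonal_conj (A B : Matrix ι ι K) {d q : ι → K} (e p : ι → K)
    (hd : ∀ i, d i ≠ 0) (hq : ∀ i, q i ≠ 0) :
    riccati (diagonal d * A * diagonal d) (diagonal d * B * diagonal e) (diagonal p)
        (diagonal d * diagonal q * diagonal d) =
      diagonal d * (riccati A B (diagonal p) (diagonal q) -
        (diagonal p * B) * diagonal (fun i => (q i)⁻¹ - (e i / d i) ^ 2 / q i) *
          (diagonal p * B)ᵀ) * diagonal d := by
  set D := diagonal d
  set E := diagonal e
  set P := diagonal p
  set W := diagonal fun i => (e i / d i) ^ 2 / q i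
  set M := diagonal fun i => (q i)⁻¹ - (e i / d i) ^ 2 / q i
  have hPD : P * D = D * P := by simp only [P, D, diagonal_mul_diagonal, mul_comm]
  have hDt : Dᵀ = D := diagonal_transpose d
  have hEt : Eᵀ = E := diagonal_transpose e
  have hW : E * (D * diagonal q * D)⁻¹ * E = W := by
    rw [diagonal_mul_diagonal, diagonal_mul_diagonal,
      inv_diagonal_of_ne_zero fun i => by simp [hd i, hq i], diagonal_mul_diagonal,
      diagonal_mul_diagonal]
    congr 1; funext i; simp only [Pi.inv_apply]; field_simp
  have hQ : (diagonal q)⁻¹ = W + M := by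
    rw [diagonal_add, inv_diagonal_of_ne_zero hq]; congr 1; funext i; simp
  have hA₁ : (D * A * D)ᵀ * P = D * (Aᵀ * P) * D := by
    simp only [transpose_mul, hDt, Matrix.mul_assoc]
    rw [← hPD]
  have hA₂ : P * (D * A * D) = D * (P * A) * D := by
    simp only [Matrix.mul_assoc]
    rw [← Matrix.mul_assoc P D, hPD, Matrix.mul_assoc]
  have hB : P * (D * B * E) * (D * diagonal q * D)⁻¹ * (D * B * E)ᵀ * P =
      D * (P * B * W * Bᵀ * P) * D := by
    simp only [← hW, transpose_mul, hDt, hEt, Matrix.mul_assoc]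
    rw [← Matrix.mul_assoc P D, hPD, Matrix.mul_assoc, ← hPD]
  rw [riccati, riccati, hA₁, hA₂, hB, hQ, transpose_mul, diagonal_transpose]
  noncomm_ring

lemma PosDef.mul_mul_self_of_isDiag {D X : Matrix ι ι ℝ} (hX : X.PosDef) (hD : D.IsDiag)
    (hd : ∀ i, D i i ≠ 0) : (D * X * D).PosDef := by
  obtain ⟨d, rfl⟩ : ∃ d, D = diagonal d := ⟨_, hD.diagonal_diag.symm⟩
  have hinj : Function.Injective (diagonal d).mulVec :=
    mulVec_injective_of_det_ne_zero <| by
      rw [det_diagonal]; exact Finset.prod_ne_zero_iff.mpr fun i _ => by simpa using hd i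
  simpa using hX.conjTranspose_mul_mul_same hinj

lemma posDef_neg_riccati_conj {A B D E P Q : Matrix ι ι ℝ} (hD : D.IsDiag) (hE : E.IsDiag)
    (hP : P.IsDiag) (hQ : Q.IsDiag) (hQpos : Q.PosDef) (hd : ∀ i, D i i ≠ 0)
    (hed : ∀ i, E i i ^ 2 ≤ D i i ^ 2) (hR : (-riccati A B P Q).PosDef) :
    (-riccati (D * A * D) (D * B * E) P (D * Q * D)).PosDef := by
  obtain ⟨d, rfl⟩ : ∃ d, D = diagonal d := ⟨_, hD.diagonal_diag.symm⟩
  obtain ⟨e, rfl⟩ : ∃ e, E = diagonal e := ⟨_, hE.diagonal_diag.symm⟩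
  obtain ⟨p, rfl⟩ : ∃ p, P = diagonal p := ⟨_, hP.diagonal_diag.symm⟩
  obtain ⟨q, rfl⟩ : ∃ q, Q = diagonal q := ⟨_, hQ.diagonal_diag.symm⟩
  simp only [diagonal_apply_eq] at hd hed
  have hq := posDef_diagonal_iff.1 hQpos
  have hM : ∀ i, 0 ≤ (q i)⁻¹ - (e i / d i) ^ 2 / q i := fun i => by
    have : (e i / d i) ^ 2 ≤ 1 := by
      have := hd i
      rw [div_pow, div_le_one (by positivity)]
      exact hed i
    rw [sub_nonneg, ← one_div]
    exact div_le_div_of_nonneg_right this (hq i).le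
  have hS := (posSemidef_diagonal_iff.2 hM).mul_mul_conjTranspose_same (diagonal p * B)
  rw [conjTranspose_eq_transpose_of_trivial] at hS
  have hneg : ∀ D R S : Matrix ι ι ℝ, -(D * (R - S) * D) = D * (-R + S) * D := fun _ _ _ => by
    noncomm_ring
  rw [riccati_diagonal_conj A B e p hd fun i => (hq i).ne', hneg]
  exact (hR.add_posSemidef hS).mul_mul_self_of_isDiag (isDiag_diagonal d) (by simpa using hd)

end Matrix

theorem diag_riccati_DAD_DBE {n : ℕ} (A B D E : Matrix (Fin n) (Fin n) ℝ)
    (hAB : DiagRiccatiStable A B) (hD : D.IsDiag) (hE : E.IsDiag)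
    (hde : ∀ i : Fin n, 0 < (E i i) ^ 2 ∧ (E i i) ^ 2 ≤ (D i i) ^ 2) :
    DiagRiccatiStable (D * A * D) (D * B * E) ∧
      ∀ P Q : Matrix (Fin n) (Fin n) ℝ, P.IsDiag → Q.IsDiag → P.PosDef → Q.PosDef →
        (-(Aᵀ * P + P * A + Q + P * B * Q⁻¹ * Bᵀ * P)).PosDef →
        (-((D * A * D)ᵀ * P + P * (D * A * D) + D * Q * D +
            P * (D * B * E) * (D * Q * D)⁻¹ * (D * B * E)ᵀ * P)).PosDef := by
  have hd : ∀ i, D i i ≠ 0 := fun i =>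
    pow_ne_zero_iff two_ne_zero |>.mp ((hde i).1.trans_le (hde i).2).ne'
  have hed : ∀ i, E i i ^ 2 ≤ D i i ^ 2 := fun i => (hde i).2
  refine ⟨?_, fun P Q hP hQ _ hQpos hR => posDef_neg_riccati_conj hD hE hP hQ hQpos hd hed hR⟩
  obtain ⟨P, Q, hP, hQ, hPpos, hQpos, hR⟩ := hAB
  exact ⟨P, D * Q * D, hP, (hD.mul hQ).mul hD, hPpos, hQpos.mul_mul_self_of_isDiag hD hd,
    posDef_neg_riccati_conj hD hE hP hQ hQpos hd hed hR⟩
end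

section
/- Let C, D be nonzero real numbers. For all real x, y, z with |x| ≤ 1, |y| ≤ 1, |z| ≤ 1 and 1 - (x² + y² + z²) + 2xyz ≥ 0, one has |Cx + Dyz| ≤ max{|C|, |C + D|}. -/
theorem lagrange_bound (C D : ℝ) (hC : C ≠ 0) (hD : D ≠ 0) :
    ∀ x y z : ℝ, |x| ≤ 1 → |y| ≤ 1 → |z| ≤ 1 →
      0 ≤ 1 - (x ^ 2 + y ^ 2 + z ^ 2) + 2 * x * y * z →
      |C * x + D * y * z| ≤ max |C| |C + D| := by
  intro x y z hx hy hz hcon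
  have hyz : |y * z| ≤ 1 := by
    rw [abs_mul]
    calc |y| * |z| ≤ 1 * 1 := by
          exact mul_le_mul hy hz (abs_nonneg _) zero_le_one
      _ = 1 := by ring
  have hsq : |y * z| ^ 2 = (y * z) ^ 2 := sq_abs _
  have hs : |x - y * z| ≤ 1 - |y * z| := by
    apply abs_le_of_sq_le_sq _ (by linarith)
    have habs : |y * z| = |y| * |z| := abs_mul y z
    nlinarith [sq_nonneg (|y| - |z|), sq_abs y, sq_abs z, abs_nonneg y, abs_nonneg z]
  have hM1 : |C| ≤ max |C| |C + D| := le_max_left _ _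
  have hM2 : |C + D| ≤ max |C| |C + D| := le_max_right _ _
  have h1 : |C * x + D * y * z| ≤ |C + D| * |y * z| + |C| * |x - y * z| := by
    calc |C * x + D * y * z| = |(C + D) * (y * z) + C * (x - y * z)| := by
          rw [show C * x + D * y * z = (C + D) * (y * z) + C * (x - y * z) from by ring]
      _ ≤ |(C + D) * (y * z)| + |C * (x - y * z)| := abs_add_le _ _
      _ = |C + D| * |y * z| + |C| * |x - y * z| := by rw [abs_mul (C + D) (y * z), abs_mul C (x - y * z)]
  have h2 : |C + D| * |y * z| + |C| * |x - y * z| ≤ max |C| |C + D| := by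
    have := abs_nonneg (y * z)
    have := abs_nonneg (x - y * z)
    nlinarith [mul_le_mul_of_nonneg_left hs (abs_nonneg C),
      mul_le_mul_of_nonneg_right hM2 (abs_nonneg (y*z)),
      mul_le_mul_of_nonneg_right hM1 (sub_nonneg.mpr hyz)]
  linarith
end

section
/- Let A, B ∈ ℝ^{3×3} with A lower bidiagonal: A = [[a₁,0,0],[c₁,a₂,0],[0,c₂,a₃]], and B = [[0,0,b₁],[0,0,b₂],[0,0,0]]. Then (A, B) is diagonally Riccati stable if and only if: (i) a_i < 0 for i = 1,2,3; (ii) a₂a₃ > |b₂c₂|; (iii) |a₁a₂a₃| > |c₂(b₁c₁ - a₁b₂)|. -/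
/-!
With `P = diag p` and `Q = diag q` the Riccati matrix `-(AᵀP + PA + Q + PBQ⁻¹BᵀP)` is symmetric
tridiagonal, and completing squares shows that `!![x, y, 0; y, z, w; 0, w, t]` is positive definite
iff `x, t > 0` and `y² / x + w² / t < z`. Dropping `q₁, q₂ > 0` and taking the best `p₃`, this
inequality becomes `C p₂² + D < 2 (-a₂) p₂` with `C D = c₂² R / a₃²`, where
`R = b₂² + (c₁ q₃ + p₁ b₁ b₂)² / (-2 a₁ p₁ q₃ - p₁² b₁²)`; such a `p₂ > 0` exists iff `-a₂ > 0` and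
`C D < a₂²` (AM–GM). Since `R ≥ b₂²` and `a₁² R - (b₁ c₁ - a₁ b₂)²` is a square divided by a
positive number, `c₂² R < a₂² a₃²` gives (ii) and (iii). Conversely, for `q₃ = 1` the inequality
`c₂² R < a₂² a₃²` is quadratic in `p₁` with discriminant the product of the gaps in (ii) and (iii),
and small `q₁ = q₂ > 0` keep all inequalities strict.
-/

open Matrix

open Filter Topology

theorem Matrix.posDef_tridiagonal_fin_three_iff (x y z w t : ℝ) :
    !![x, y, 0; y, z, w; 0, w, t].PosDef ↔ 0 < x ∧ 0 < t ∧ y ^ 2 / x + w ^ 2 / t < z := by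
  have hform (v : Fin 3 → ℝ) : star v ⬝ᵥ (!![x, y, 0; y, z, w; 0, w, t] *ᵥ v) =
      x * v 0 ^ 2 + z * v 1 ^ 2 + t * v 2 ^ 2 + 2 * y * v 0 * v 1 + 2 * w * v 1 * v 2 := by
    simp only [dotProduct, Pi.star_apply, star_trivial, mulVec, of_apply, cons_val',
      cons_val_fin_one, Fin.sum_univ_three, cons_val_zero, cons_val_one, cons_val, zero_mul,
      add_zero, zero_add]
    ring
  have hsq (hx : x ≠ 0) (ht : t ≠ 0) (v : Fin 3 → ℝ) :
      x * v 0 ^ 2 + z * v 1 ^ 2 + t * v 2 ^ 2 + 2 * y * v 0 * v 1 + 2 * w * v 1 * v 2 =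
        x * (v 0 + y / x * v 1) ^ 2 + t * (v 2 + w / t * v 1) ^ 2 +
          (z - (y ^ 2 / x + w ^ 2 / t)) * v 1 ^ 2 := by
    field_simp
    ring
  rw [posDef_iff_dotProduct_mulVec]
  constructor
  · rintro ⟨-, hpos⟩
    replace hpos (v : Fin 3 → ℝ) (hv : v ≠ 0) := hform v ▸ hpos hv
    have hx : 0 < x := by simpa using hpos ![1, 0, 0] (by simp)
    have ht : 0 < t := by simpa using hpos ![0, 0, 1] (by simp)
    have hz := hpos ![-(y / x), 1, -(w / t)] (by simp)
    rw [hsq hx.ne' ht.ne'] at hz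
    exact ⟨hx, ht, by simpa using hz⟩
  · rintro ⟨hx, ht, hz⟩
    refine ⟨by ext i j; fin_cases i <;> fin_cases j <;> rfl, fun v hv ↦ ?_⟩
    rw [hform, hsq hx.ne' ht.ne']
    by_cases hv₁ : v 1 = 0
    · have : v 0 ≠ 0 ∨ v 2 ≠ 0 := by
        by_contra! h
        exact hv (by ext i; fin_cases i <;> simp [h.1, h.2, hv₁])
      rcases this with h | h <;> simp [hv₁] <;> positivity
    · have := sub_pos.mpr hz
      positivity

theorem exists_pos_mul_sq_add_lt_iff {a c β : ℝ} (ha : 0 ≤ a) (hc : 0 ≤ c) :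
    (∃ x, 0 < x ∧ a * x ^ 2 + c < 2 * β * x) ↔ 0 < β ∧ a * c < β ^ 2 := by
  constructor
  · rintro ⟨x, hx, h⟩
    have hβ : 0 < β := by nlinarith [sq_nonneg x]
    have hsq : (a * x ^ 2 + c) ^ 2 < (2 * β * x) ^ 2 := by gcongr
    have hamgm : 4 * (a * c) * x ^ 2 ≤ (a * x ^ 2 + c) ^ 2 := by
      nlinarith [sq_nonneg (a * x ^ 2 - c)]
    exact ⟨hβ, lt_of_mul_lt_mul_right (a := x ^ 2) (by nlinarith) (sq_nonneg x)⟩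
  · rintro ⟨hβ, h⟩
    rcases ha.eq_or_lt with rfl | ha
    · exact ⟨(c + 1) / (2 * β), by positivity, by field_simp; linarith⟩
    · refine ⟨β / a, by positivity, ?_⟩
      field_simp
      nlinarith

theorem exists_pos_div_sub_add_lt_sub {r k u E : ℝ} (hE : 0 < E) (h : r / E + k < u) :
    ∃ ε > 0, ε < E ∧ r / (E - ε) + k < u - ε := by
  have hcont : ContinuousAt (fun ε ↦ r / (E - ε) + k + ε) 0 := by
    have : E - 0 ≠ 0 := by simpa using hE.ne'
    fun_prop (disch := assumption)
  have hsmall : ∀ᶠ ε in 𝓝[>] 0, r / (E - ε) + k + ε < u ∧ ε < E ∧ 0 < ε := by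
    filter_upwards [nhdsWithin_le_nhds (hcont.eventually_lt continuousAt_const (by simpa using h)),
      nhdsWithin_le_nhds (eventually_lt_nhds hE), self_mem_nhdsWithin] with ε h₁ h₂ h₃
    exact ⟨h₁, h₂, h₃⟩
  obtain ⟨ε, h₁, h₂, h₃⟩ := hsmall.exists
  exact ⟨ε, h₃, h₂, by linarith⟩

theorem neg_riccati_bidiagonal_eq (a₁ a₂ a₃ c₁ c₂ b₁ b₂ : ℝ) (p q : Fin 3 → ℝ)
    (hq : ∀ i, q i ≠ 0) :
    -(!![a₁, 0, 0; c₁, a₂, 0; 0, c₂, a₃]ᵀ * diagonal p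
        + diagonal p * !![a₁, 0, 0; c₁, a₂, 0; 0, c₂, a₃] + diagonal q
        + diagonal p * !![0, 0, b₁; 0, 0, b₂; 0, 0, 0] * (diagonal q)⁻¹
          * !![0, 0, b₁; 0, 0, b₂; 0, 0, 0]ᵀ * diagonal p) =
      !![-(2 * a₁ * p 0 + q 0 + p 0 ^ 2 * b₁ ^ 2 / q 2), -(c₁ * p 1 + p 0 * p 1 * b₁ * b₂ / q 2), 0;
        -(c₁ * p 1 + p 0 * p 1 * b₁ * b₂ / q 2), -(2 * a₂ * p 1 + q 1 + p 1 ^ 2 * b₂ ^ 2 / q 2),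
          -(c₂ * p 2);
        0, -(c₂ * p 2), -(2 * a₃ * p 2 + q 2)] := by
  have hinv : (diagonal q)⁻¹ = diagonal q⁻¹ := by
    refine inv_eq_left_inv ?_
    rw [diagonal_mul_diagonal, ← diagonal_one]
    congr with i
    exact inv_mul_cancel₀ (hq i)
  rw [hinv]
  ext i j
  fin_cases i <;> fin_cases j <;> simp [Matrix.mul_apply, Fin.sum_univ_three] <;> ring

noncomputable def riccatiCoeff (a₁ b₁ b₂ c₁ p s : ℝ) : ℝ :=
  b₂ ^ 2 + (c₁ * s + p * b₁ * b₂) ^ 2 / (-2 * a₁ * p * s - p ^ 2 * b₁ ^ 2)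

theorem sq_sub_le_sq_mul_riccatiCoeff {a₁ b₁ b₂ c₁ p s : ℝ}
    (hE : 0 < -2 * a₁ * p * s - p ^ 2 * b₁ ^ 2) :
    (b₁ * c₁ - a₁ * b₂) ^ 2 ≤ a₁ ^ 2 * riccatiCoeff a₁ b₁ b₂ c₁ p s := by
  have key : a₁ ^ 2 * riccatiCoeff a₁ b₁ b₂ c₁ p s - (b₁ * c₁ - a₁ * b₂) ^ 2 =
      (a₁ * c₁ * s + p * b₁ * (b₁ * c₁ - a₁ * b₂)) ^ 2 / (-2 * a₁ * p * s - p ^ 2 * b₁ ^ 2) := by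
    rw [riccatiCoeff]
    generalize hE_def : -2 * a₁ * p * s - p ^ 2 * b₁ ^ 2 = E at hE
    field_simp
    rw [← hE_def]
    ring
  have : 0 ≤ (a₁ * c₁ * s + p * b₁ * (b₁ * c₁ - a₁ * b₂)) ^ 2 /
      (-2 * a₁ * p * s - p ^ 2 * b₁ ^ 2) := by positivity
  linarith

theorem conditions_of_riccatiCoeff_lt {a₁ a₂ a₃ c₁ c₂ b₁ b₂ p s : ℝ} (ha₁ : a₁ < 0) (ha₂ : a₂ < 0)
    (ha₃ : a₃ < 0) (hE : 0 < -2 * a₁ * p * s - p ^ 2 * b₁ ^ 2)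
    (h : c₂ ^ 2 * riccatiCoeff a₁ b₁ b₂ c₁ p s < a₂ ^ 2 * a₃ ^ 2) :
    |b₂ * c₂| < a₂ * a₃ ∧ |c₂ * (b₁ * c₁ - a₁ * b₂)| < |a₁ * a₂ * a₃| := by
  have hb₂ : b₂ ^ 2 ≤ riccatiCoeff a₁ b₁ b₂ c₁ p s :=
    le_add_of_nonneg_right (div_nonneg (sq_nonneg _) hE.le)
  refine ⟨abs_lt_of_sq_lt_sq ?_ (mul_pos_of_neg_of_neg ha₂ ha₃).le, sq_lt_sq.1 ?_⟩
  · calc (b₂ * c₂) ^ 2 = c₂ ^ 2 * b₂ ^ 2 := by ring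
      _ ≤ c₂ ^ 2 * riccatiCoeff a₁ b₁ b₂ c₁ p s := by gcongr
      _ < (a₂ * a₃) ^ 2 := by linarith
  · calc (c₂ * (b₁ * c₁ - a₁ * b₂)) ^ 2 = c₂ ^ 2 * (b₁ * c₁ - a₁ * b₂) ^ 2 := by ring
      _ ≤ c₂ ^ 2 * (a₁ ^ 2 * riccatiCoeff a₁ b₁ b₂ c₁ p s) := by
        gcongr
        exact sq_sub_le_sq_mul_riccatiCoeff hE
      _ = a₁ ^ 2 * (c₂ ^ 2 * riccatiCoeff a₁ b₁ b₂ c₁ p s) := by ring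
      _ < a₁ ^ 2 * (a₂ ^ 2 * a₃ ^ 2) := by gcongr; exact sq_pos_of_neg ha₁
      _ = (a₁ * a₂ * a₃) ^ 2 := by ring

theorem riccatiCoeff_lt_of_weights {a₁ a₂ a₃ c₁ c₂ b₁ b₂ p₁ p₂ p₃ q₁ q₂ q₃ : ℝ}
    (hp₁ : 0 < p₁) (hp₂ : 0 < p₂) (hp₃ : 0 < p₃) (hq₁ : 0 < q₁) (hq₂ : 0 < q₂) (hq₃ : 0 < q₃)
    (h₁ : 0 < -(2 * a₁ * p₁ + q₁ + p₁ ^ 2 * b₁ ^ 2 / q₃)) (h₃ : 0 < -(2 * a₃ * p₃ + q₃))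
    (h₂ : (-(c₁ * p₂ + p₁ * p₂ * b₁ * b₂ / q₃)) ^ 2 / -(2 * a₁ * p₁ + q₁ + p₁ ^ 2 * b₁ ^ 2 / q₃)
        + (-(c₂ * p₃)) ^ 2 / -(2 * a₃ * p₃ + q₃) < -(2 * a₂ * p₂ + q₂ + p₂ ^ 2 * b₂ ^ 2 / q₃)) :
    (a₁ < 0 ∧ a₂ < 0 ∧ a₃ < 0) ∧ 0 < -2 * a₁ * p₁ * q₃ - p₁ ^ 2 * b₁ ^ 2 ∧
      c₂ ^ 2 * riccatiCoeff a₁ b₁ b₂ c₁ p₁ q₃ < a₂ ^ 2 * a₃ ^ 2 := by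
  set E := -2 * a₁ * p₁ * q₃ - p₁ ^ 2 * b₁ ^ 2
  set R := riccatiCoeff a₁ b₁ b₂ c₁ p₁ q₃ with hR
  have hm₁₁ : -(2 * a₁ * p₁ + q₁ + p₁ ^ 2 * b₁ ^ 2 / q₃) = (E - q₁ * q₃) / q₃ := by
    field_simp
    ring
  rw [hm₁₁] at h₁ h₂
  have hEq : 0 < E - q₁ * q₃ := (div_pos_iff_of_pos_right hq₃).1 h₁
  have hE : 0 < E := by nlinarith [mul_pos hq₁ hq₃]
  have ha₁ : a₁ < 0 := by
    by_contra! h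
    nlinarith [mul_nonneg (mul_nonneg h hp₁.le) hq₃.le, sq_nonneg (p₁ * b₁)]
  have ha₃ : a₃ < 0 := by nlinarith
  have hm₁₂ : (-(c₁ * p₂ + p₁ * p₂ * b₁ * b₂ / q₃)) ^ 2 / ((E - q₁ * q₃) / q₃) =
      p₂ ^ 2 * ((c₁ * q₃ + p₁ * b₁ * b₂) ^ 2 / (E - q₁ * q₃)) / q₃ := by
    field_simp
  rw [hm₁₂] at h₂
  have hterm₁ : p₂ ^ 2 * ((c₁ * q₃ + p₁ * b₁ * b₂) ^ 2 / E) / q₃ ≤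
      p₂ ^ 2 * ((c₁ * q₃ + p₁ * b₁ * b₂) ^ 2 / (E - q₁ * q₃)) / q₃ := by
    gcongr
    linarith [mul_pos hq₁ hq₃]
  have hterm₂ : c₂ ^ 2 * q₃ / a₃ ^ 2 ≤ (-(c₂ * p₃)) ^ 2 / -(2 * a₃ * p₃ + q₃) := by
    rw [div_le_div_iff₀ (sq_pos_of_neg ha₃) h₃]
    nlinarith [mul_nonneg (sq_nonneg c₂) (sq_nonneg (a₃ * p₃ + q₃))]
  have hreduced : R / q₃ * p₂ ^ 2 + c₂ ^ 2 * q₃ / a₃ ^ 2 < 2 * -a₂ * p₂ := by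
    have : R / q₃ * p₂ ^ 2 =
        p₂ ^ 2 * b₂ ^ 2 / q₃ + p₂ ^ 2 * ((c₁ * q₃ + p₁ * b₁ * b₂) ^ 2 / E) / q₃ := by
      rw [hR, riccatiCoeff]
      ring
    linarith
  have hR₀ : 0 ≤ R := add_nonneg (sq_nonneg _) (div_nonneg (sq_nonneg _) hE.le)
  obtain ⟨ha₂, hRc⟩ :=
    (exists_pos_mul_sq_add_lt_iff (by positivity) (by positivity)).1 ⟨p₂, hp₂, hreduced⟩
  refine ⟨⟨ha₁, by linarith, ha₃⟩, hE, ?_⟩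
  have : R / q₃ * (c₂ ^ 2 * q₃ / a₃ ^ 2) = c₂ ^ 2 * R / a₃ ^ 2 := by field_simp
  rwa [this, div_lt_iff₀ (sq_pos_of_neg ha₃), neg_sq] at hRc

theorem conditions_of_diagRiccatiStable {a₁ a₂ a₃ c₁ c₂ b₁ b₂ : ℝ}
    (h : DiagRiccatiStable !![a₁, 0, 0; c₁, a₂, 0; 0, c₂, a₃] !![0, 0, b₁; 0, 0, b₂; 0, 0, 0]) :
    (a₁ < 0 ∧ a₂ < 0 ∧ a₃ < 0) ∧ |b₂ * c₂| < a₂ * a₃ ∧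
      |c₂ * (b₁ * c₁ - a₁ * b₂)| < |a₁ * a₂ * a₃| := by
  obtain ⟨P, Q, hP, hQ, hPpos, hQpos, hM⟩ := h
  obtain ⟨p, rfl⟩ : ∃ p, P = diagonal p := ⟨_, hP.diagonal_diag.symm⟩
  obtain ⟨q, rfl⟩ : ∃ q, Q = diagonal q := ⟨_, hQ.diagonal_diag.symm⟩
  rw [posDef_diagonal_iff] at hPpos hQpos
  rw [neg_riccati_bidiagonal_eq _ _ _ _ _ _ _ p q fun i ↦ (hQpos i).ne',
    posDef_tridiagonal_fin_three_iff] at hM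
  obtain ⟨⟨ha₁, ha₂, ha₃⟩, hE, hR⟩ := riccatiCoeff_lt_of_weights (hPpos 0) (hPpos 1) (hPpos 2)
    (hQpos 0) (hQpos 1) (hQpos 2) hM.1 hM.2.1 hM.2.2
  exact ⟨⟨ha₁, ha₂, ha₃⟩, conditions_of_riccatiCoeff_lt ha₁ ha₂ ha₃ hE hR⟩

theorem exists_riccatiCoeff_lt {a₁ a₂ a₃ c₁ c₂ b₁ b₂ : ℝ} (ha₁ : a₁ < 0)
    (h₂ : |b₂ * c₂| < a₂ * a₃) (h₃ : |c₂ * (b₁ * c₁ - a₁ * b₂)| < |a₁ * a₂ * a₃|) :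
    ∃ p > 0, 0 < -2 * a₁ * p * 1 - p ^ 2 * b₁ ^ 2 ∧
      c₂ ^ 2 * riccatiCoeff a₁ b₁ b₂ c₁ p 1 < a₂ ^ 2 * a₃ ^ 2 := by
  have hK : c₂ ^ 2 * b₂ ^ 2 < a₂ ^ 2 * a₃ ^ 2 := by
    linarith [sq_lt_sq.2 (h₂.trans_le (le_abs_self _))]
  have hL : c₂ ^ 2 * (b₁ * c₁ - a₁ * b₂) ^ 2 < a₁ ^ 2 * a₂ ^ 2 * a₃ ^ 2 := by
    linarith [sq_lt_sq.2 h₃]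
  set K := a₂ ^ 2 * a₃ ^ 2 - c₂ ^ 2 * b₂ ^ 2 with hK_def
  set γ := -a₁ * K - c₂ ^ 2 * c₁ * b₁ * b₂ with hγ_def
  have hγ : 0 < γ := by
    have h2γ : a₁ ^ 2 * K + (c₂ * b₁ * c₁) ^ 2 < 2 * -a₁ * γ := by
      rw [hγ_def, hK_def]
      linarith
    have hK₁ : 0 < a₁ ^ 2 * K := mul_pos (sq_pos_of_neg ha₁) (by linarith)
    exact pos_of_mul_pos_right (by linarith [sq_nonneg (c₂ * b₁ * c₁)])
      (by linarith : 0 ≤ 2 * -a₁)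
  have hdisc : b₁ ^ 2 * (a₂ ^ 2 * a₃ ^ 2) * (c₂ ^ 2 * c₁ ^ 2) < γ ^ 2 := by
    have : γ ^ 2 - b₁ ^ 2 * (a₂ ^ 2 * a₃ ^ 2) * (c₂ ^ 2 * c₁ ^ 2) =
        K * (a₁ ^ 2 * a₂ ^ 2 * a₃ ^ 2 - c₂ ^ 2 * (b₁ * c₁ - a₁ * b₂) ^ 2) := by ring
    have : 0 < K * (a₁ ^ 2 * a₂ ^ 2 * a₃ ^ 2 - c₂ ^ 2 * (b₁ * c₁ - a₁ * b₂) ^ 2) :=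
      mul_pos (by linarith) (by linarith)
    linarith
  obtain ⟨p, hp, hquad⟩ :=
    (exists_pos_mul_sq_add_lt_iff (by positivity) (by positivity)).2 ⟨hγ, hdisc⟩
  have hsq : c₂ ^ 2 * (c₁ * 1 + p * b₁ * b₂) ^ 2 < K * (-2 * a₁ * p * 1 - p ^ 2 * b₁ ^ 2) := by
    linarith
  have hE : 0 < -2 * a₁ * p * 1 - p ^ 2 * b₁ ^ 2 := by
    nlinarith [sq_nonneg (c₂ * (c₁ * 1 + p * b₁ * b₂))]
  refine ⟨p, hp, hE, ?_⟩
  rw [riccatiCoeff, mul_add, mul_div_assoc', ← lt_sub_iff_add_lt', div_lt_iff₀ hE]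
  exact hsq

theorem diagRiccatiStable_of_conditions {a₁ a₂ a₃ c₁ c₂ b₁ b₂ : ℝ} (ha₁ : a₁ < 0) (ha₂ : a₂ < 0)
    (ha₃ : a₃ < 0) (h₂ : |b₂ * c₂| < a₂ * a₃) (h₃ : |c₂ * (b₁ * c₁ - a₁ * b₂)| < |a₁ * a₂ * a₃|) :
    DiagRiccatiStable !![a₁, 0, 0; c₁, a₂, 0; 0, c₂, a₃] !![0, 0, b₁; 0, 0, b₂; 0, 0, 0] := by
  obtain ⟨p₁, hp₁, hE, hR⟩ := exists_riccatiCoeff_lt ha₁ h₂ h₃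
  set E := -2 * a₁ * p₁ * 1 - p₁ ^ 2 * b₁ ^ 2
  set R := riccatiCoeff a₁ b₁ b₂ c₁ p₁ 1 with hR_def
  obtain ⟨p₂, hp₂, hp₂R⟩ := (exists_pos_mul_sq_add_lt_iff (a := R) (c := c₂ ^ 2 / a₃ ^ 2)
    (β := -a₂) (add_nonneg (sq_nonneg _) (div_nonneg (sq_nonneg _) hE.le)) (by positivity)).2
    ⟨neg_pos.2 ha₂, by
      rw [neg_sq, ← mul_div_assoc, div_lt_iff₀ (sq_pos_of_neg ha₃)]
      linarith⟩
  have hR_mul : R * p₂ ^ 2 = p₂ ^ 2 * b₂ ^ 2 + p₂ ^ 2 * (c₁ + p₁ * b₁ * b₂) ^ 2 / E := by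
    rw [hR_def, riccatiCoeff]
    ring
  obtain ⟨ε, hε, hεE, hεR⟩ := exists_pos_div_sub_add_lt_sub (r := p₂ ^ 2 * (c₁ + p₁ * b₁ * b₂) ^ 2)
    (k := c₂ ^ 2 / a₃ ^ 2) (u := -(2 * a₂ * p₂ + p₂ ^ 2 * b₂ ^ 2)) hE (by linarith)
  -- `p₃ = (-a₃)⁻¹` minimises `(c₂ p₃)² / (-2 a₃ p₃ - 1)`, with value `c₂² / a₃²`.
  refine ⟨diagonal ![p₁, p₂, (-a₃)⁻¹], diagonal ![ε, ε, 1], isDiag_diagonal _, isDiag_diagonal _,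
    posDef_diagonal_iff.2 ?_, posDef_diagonal_iff.2 ?_, ?_⟩
  · intro i; fin_cases i <;> simp [hp₁, hp₂, ha₃]
  · intro i; fin_cases i <;> simp [hε]
  rw [neg_riccati_bidiagonal_eq _ _ _ _ _ _ _ _ _ (fun i ↦ by fin_cases i <;> simp [hε.ne']),
    posDef_tridiagonal_fin_three_iff]
  simp only [cons_val_zero, cons_val_one, cons_val_two, head_cons, tail_cons, div_one]
  have hm₁₁ : -(2 * a₁ * p₁ + ε + p₁ ^ 2 * b₁ ^ 2) = E - ε := by ring
  have hm₁₂ : (-(c₁ * p₂ + p₁ * p₂ * b₁ * b₂)) ^ 2 = p₂ ^ 2 * (c₁ + p₁ * b₁ * b₂) ^ 2 := by ring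
  have hm₂₃ : (-(c₂ * (-a₃)⁻¹)) ^ 2 = c₂ ^ 2 / a₃ ^ 2 := by field_simp
  have hm₃₃ : -(2 * a₃ * (-a₃)⁻¹ + 1) = 1 := by field_simp [ha₃.ne]; ring
  rw [hm₁₁, hm₁₂, hm₂₃, hm₃₃, div_one]
  exact ⟨by linarith, one_pos, by linarith⟩

theorem bidiagonal_3x3_riccati (a₁ a₂ a₃ c₁ c₂ b₁ b₂ : ℝ) :
    DiagRiccatiStable !![a₁, 0, 0; c₁, a₂, 0; 0, c₂, a₃]
        !![0, 0, b₁; 0, 0, b₂; 0, 0, 0] ↔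
      (a₁ < 0 ∧ a₂ < 0 ∧ a₃ < 0) ∧ |b₂ * c₂| < a₂ * a₃ ∧
        |c₂ * (b₁ * c₁ - a₁ * b₂)| < |a₁ * a₂ * a₃| :=
  ⟨conditions_of_diagRiccatiStable, fun ⟨⟨ha₁, ha₂, ha₃⟩, h₂, h₃⟩ ↦
    diagRiccatiStable_of_conditions ha₁ ha₂ ha₃ h₂ h₃⟩
end

section
/- Let A, B ∈ ℝ^{n×n} be such that the pair (A, B) is diagonally Riccati stable. Then for every diagonal positive definite matrix D, the matrix D(A+B) is Hurwitz; in particular, A + B is Hurwitz. -/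
open Matrix

/-- A real matrix is Hurwitz if all its (complex) eigenvalues have negative real part. -/
def IsHurwitz {m : ℕ} (M : Matrix (Fin m) (Fin m) ℝ) : Prop :=
  ∀ μ ∈ spectrum ℂ (M.map (algebraMap ℝ ℂ)), μ.re < 0

namespace Matrix

variable {ι : Type*} [Fintype ι]

lemma exists_mulVec_eq_smul_of_mem_spectrum {K : Type*} [Field K] [DecidableEq ι]
    {M : Matrix ι ι K} {μ : K} (hμ : μ ∈ spectrum K M) : ∃ v ≠ 0, M *ᵥ v = μ • v := by
  rw [← spectrum_toLin', ← Module.End.hasEigenvalue_iff_mem_spectrum] at hμ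
  obtain ⟨v, hv⟩ := hμ.exists_hasEigenvector
  exact ⟨v, hv.2, Module.End.mem_eigenspace_iff.mp hv.1⟩

lemma re_star_dotProduct_map_mulVec (S : Matrix ι ι ℝ) (v : ι → ℂ) :
    (star v ⬝ᵥ S.map (algebraMap ℝ ℂ) *ᵥ v).re =
      (fun i => (v i).re) ⬝ᵥ S *ᵥ (fun i => (v i).re) +
        (fun i => (v i).im) ⬝ᵥ S *ᵥ (fun i => (v i).im) := by
  simp only [dotProduct, mulVec, Finset.mul_sum, Complex.re_sum, ← Finset.sum_add_distrib]
  refine Finset.sum_congr rfl fun i _ => Finset.sum_congr rfl fun j _ => ?_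
  simp [Complex.mul_re, Complex.mul_im]

lemma PosDef.re_star_dotProduct_map_mulVec_pos {S : Matrix ι ι ℝ} (hS : S.PosDef)
    {v : ι → ℂ} (hv : v ≠ 0) : 0 < (star v ⬝ᵥ S.map (algebraMap ℝ ℂ) *ᵥ v).re := by
  rw [re_star_dotProduct_map_mulVec]
  have hre := hS.posSemidef.dotProduct_mulVec_nonneg (fun i => (v i).re)
  have him := hS.posSemidef.dotProduct_mulVec_nonneg (fun i => (v i).im)
  simp only [star_trivial] at hre him
  by_cases h : (fun i => (v i).re) = 0
  · have him_ne : (fun i => (v i).im) ≠ 0 := fun h' =>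
      hv (funext fun i => Complex.ext (congrFun h i) (congrFun h' i))
    have := hS.dotProduct_mulVec_pos him_ne
    simp only [star_trivial] at this
    linarith
  · have := hS.dotProduct_mulVec_pos h
    simp only [star_trivial] at this
    linarith

lemma re_lt_zero_of_mem_spectrum_of_lyapunov [DecidableEq ι] {N P : Matrix ι ι ℝ}
    (hP : P.PosDef) (hS : (-(Nᵀ * P + P * N)).PosDef) {μ : ℂ}
    (hμ : μ ∈ spectrum ℂ (N.map (algebraMap ℝ ℂ))) : μ.re < 0 := by
  set f := algebraMap ℝ ℂ
  obtain ⟨v, hv, hNv⟩ := exists_mulVec_eq_smul_of_mem_spectrum hμ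
  have hNt : Nᵀ.map f = (N.map f)ᴴ := by
    ext i j; simp [f]
  have hquad : star v ⬝ᵥ (Nᵀ * P + P * N).map f *ᵥ v =
      (starRingEnd ℂ μ + μ) * (star v ⬝ᵥ P.map f *ᵥ v) := by
    rw [Matrix.map_add _ (map_add f), Matrix.map_mul, Matrix.map_mul, add_mulVec, dotProduct_add,
      ← mulVec_mulVec, ← mulVec_mulVec, hNv, mulVec_smul, dotProduct_smul, dotProduct_mulVec,
      hNt, ← star_mulVec, hNv, star_smul, smul_dotProduct]
    simp only [smul_eq_mul, Complex.star_def]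
    ring
  have hneg := hS.re_star_dotProduct_map_mulVec_pos hv
  have hpos := hP.re_star_dotProduct_map_mulVec_pos hv
  rw [Matrix.map_neg _ (map_neg f), neg_mulVec, dotProduct_neg, Complex.neg_re, hquad,
    add_comm, Complex.add_conj, Complex.re_ofReal_mul] at hneg
  nlinarith

end Matrix

def IsDiagLyapunovStable {ι : Type*} [Fintype ι] (M : Matrix ι ι ℝ) : Prop :=
  ∃ P : Matrix ι ι ℝ, P.IsDiag ∧ P.PosDef ∧ (-(Mᵀ * P + P * M)).PosDef

namespace IsDiagLyapunovStable

variable {ι : Type*} [Fintype ι] [DecidableEq ι] {M : Matrix ι ι ℝ}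

lemma isDiag_mul (hM : IsDiagLyapunovStable M) {D : Matrix ι ι ℝ} (hD : D.IsDiag)
    (hDpos : D.PosDef) : IsDiagLyapunovStable (D * M) := by
  obtain ⟨P, hP, hPpos, hS⟩ := hM
  rw [← hP.diagonal_diag] at hPpos hS
  rw [← hD.diagonal_diag] at hDpos ⊢
  set p := P.diag
  set d := D.diag
  have hp := posDef_diagonal_iff.mp hPpos
  have hd := posDef_diagonal_iff.mp hDpos
  have hdp : (fun i => d i * (p / d) i) = p := funext fun i => mul_div_cancel₀ _ (hd i).ne'
  have hpd : (fun i => (p / d) i * d i) = p := funext fun i => div_mul_cancel₀ _ (hd i).ne'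
  refine ⟨diagonal (p / d), isDiag_diagonal _,
    posDef_diagonal_iff.mpr fun i => div_pos (hp i) (hd i), ?_⟩
  rwa [transpose_mul, diagonal_transpose, Matrix.mul_assoc, diagonal_mul_diagonal, hdp,
    ← Matrix.mul_assoc, diagonal_mul_diagonal, hpd]

end IsDiagLyapunovStable

lemma IsDiagLyapunovStable.isHurwitz {n : ℕ} {M : Matrix (Fin n) (Fin n) ℝ}
    (hM : IsDiagLyapunovStable M) : IsHurwitz M := by
  obtain ⟨P, -, hP, hS⟩ := hM
  exact fun μ hμ => re_lt_zero_of_mem_spectrum_of_lyapunov hP hS hμ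

lemma lyapunov_add_eq_riccati_sub {ι : Type*} [Fintype ι] [DecidableEq ι]
    (A B P Q : Matrix ι ι ℝ) (hP : P.IsSymm) (hQ : Q.IsSymm) (hQunit : IsUnit Q) :
    (A + B)ᵀ * P + P * (A + B) =
      Aᵀ * P + P * A + Q + P * B * Q⁻¹ * Bᵀ * P - (Q - Bᵀ * P)ᵀ * Q⁻¹ * (Q - Bᵀ * P) := by
  have hQdet := (isUnit_iff_isUnit_det Q).mp hQunit
  have hQQ : Q * Q⁻¹ = 1 := mul_nonsing_inv Q hQdet
  have hQQ' : Q⁻¹ * Q = 1 := nonsing_inv_mul Q hQdet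
  rw [transpose_sub, transpose_mul, hQ.eq, hP.eq, transpose_transpose, transpose_add]
  calc (Aᵀ + Bᵀ) * P + P * (A + B)
      = Aᵀ * P + P * A + Q + P * B * Q⁻¹ * Bᵀ * P
          - (Q * Q⁻¹ * Q - P * B * (Q⁻¹ * Q) - Q * Q⁻¹ * (Bᵀ * P) + P * B * Q⁻¹ * Bᵀ * P) := by
        rw [hQQ, hQQ']; noncomm_ring
    _ = _ := by noncomm_ring

lemma DiagRiccatiStable.isDiagLyapunovStable_add {n : ℕ} {A B : Matrix (Fin n) (Fin n) ℝ}
    (h : DiagRiccatiStable A B) : IsDiagLyapunovStable (A + B) := by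
  obtain ⟨P, Q, hP, -, hPpos, hQpos, hR⟩ := h
  refine ⟨P, hP, hPpos, ?_⟩
  rw [lyapunov_add_eq_riccati_sub A B P Q (isHermitian_iff_isSymm.mp hPpos.isHermitian)
    (isHermitian_iff_isSymm.mp hQpos.isHermitian) hQpos.isUnit, neg_sub, sub_eq_neg_add]
  exact hR.add_posSemidef <| by
    simpa using hQpos.inv.posSemidef.conjTranspose_mul_mul_same (Q - Bᵀ * P)

theorem diag_riccati_implies_D_stability {n : ℕ} (A B : Matrix (Fin n) (Fin n) ℝ)
    (hAB : DiagRiccatiStable A B) :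
    (∀ D : Matrix (Fin n) (Fin n) ℝ, D.IsDiag → D.PosDef → IsHurwitz (D * (A + B))) ∧
      IsHurwitz (A + B) := by
  have h := hAB.isDiagLyapunovStable_add
  exact ⟨fun D hD hDpos => (h.isDiag_mul hD hDpos).isHurwitz, h.isHurwitz⟩
end
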